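/- arXiv:2006.04367 — 2 statements merged into one kernel-verified Lean document; each statement's English description precedes it below -/
import Mathlib

section
/- Consider the estimator error recursion e^D_t = (1 - s_t)(A e^D_{t-1} + w_{t-1}) with e^D_{-1} = 0, where (s_t) are i.i.d. Bernoulli(p_s) random variables with p_s ∈ (0,1], independent of the zero-mean noise (w_t) with E[||w_t||^2] ≤ C_2 < ∞, and A has spectral norm ||A|| ≤ 1. Then there exists γ^D < ∞ such that E[||e^D_t||^2] ≤ γ^D for all t. Concretely, one may take γ^D = 2 C_2 (1-p_s) / p_s^2 when ||A|| ≤ 1 and p_s > 0 (or any valid finite bound). -/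
open MeasureTheory ProbabilityTheory

/-! Since `s (t+1)` is a `{0,1}`-valued Bernoulli(p) variable independent of `(e t, w t)`,
`E‖e (t+1)‖² = (1 - p) E‖A (e t) + w t‖²`. Young's inequality with weight `p` and `‖A‖ ≤ 1`
bound the latter by `(1 + p) E‖e t‖² + (1 + p⁻¹) C₂`, so `m t = E‖e t‖²` satisfies
`m (t+1) ≤ (1 - p²) m t + (1 - p²) C₂ / p`, whose fixed point `(1 - p²) C₂ / p³` bounds `m t`
for all `t` since `m 0 = 0`. -/

theorem add_sq_le_of_pos {a b ε : ℝ} (hε : 0 < ε) :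
    (a + b) ^ 2 ≤ (1 + ε) * a ^ 2 + (1 + ε⁻¹) * b ^ 2 := by
  have key : ε * (ε * a ^ 2 + ε⁻¹ * b ^ 2 - 2 * a * b) = (ε * a - b) ^ 2 := by
    field_simp; ring
  nlinarith [(mul_nonneg_iff_of_pos_left hε).1 (key ▸ sq_nonneg (ε * a - b))]

theorem norm_add_sq_le_of_pos {E : Type*} [SeminormedAddGroup E] (x y : E) {ε : ℝ} (hε : 0 < ε) :
    ‖x + y‖ ^ 2 ≤ (1 + ε) * ‖x‖ ^ 2 + (1 + ε⁻¹) * ‖y‖ ^ 2 :=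
  (pow_le_pow_left₀ (norm_nonneg _) (norm_add_le x y) 2).trans (add_sq_le_of_pos hε)

theorem le_of_le_mul_add_of_mul_add_le {m : ℕ → ℝ} {a b B : ℝ} (ha : 0 ≤ a)
    (hstep : ∀ t, m (t + 1) ≤ a * m t + b) (hB : a * B + b ≤ B) (h0 : m 0 ≤ B) :
    ∀ t, m t ≤ B
  | 0 => h0
  | t + 1 => (hstep t).trans <| by
      have := le_of_le_mul_add_of_mul_add_le ha hstep hB h0 t
      nlinarith

theorem norm_one_sub_smul_sq_of_eq_zero_or_eq_one {E : Type*} [SeminormedAddCommGroup E]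
    [NormedSpace ℝ E] {r : ℝ} (hr : r = 0 ∨ r = 1) (v : E) :
    ‖(1 - r) • v‖ ^ 2 = (1 - r) * ‖v‖ ^ 2 := by
  rcases hr with rfl | rfl <;> simp

theorem integral_map_add_norm_sq_le {Ω E : Type*} [MeasurableSpace Ω] {μ : Measure Ω}
    [NormedAddCommGroup E] [NormedSpace ℝ E] {A : E →L[ℝ] E} (hA : ‖A‖ ≤ 1) {x y : Ω → E}
    (hx : MemLp x 2 μ) (hy : MemLp y 2 μ) {ε : ℝ} (hε : 0 < ε) :
    ∫ ω, ‖A (x ω) + y ω‖ ^ 2 ∂μ ≤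
      (1 + ε) * ∫ ω, ‖x ω‖ ^ 2 ∂μ + (1 + ε⁻¹) * ∫ ω, ‖y ω‖ ^ 2 ∂μ := by
  have hx2 := hx.integrable_norm_pow two_ne_zero
  have hy2 := hy.integrable_norm_pow two_ne_zero
  rw [← integral_const_mul, ← integral_const_mul,
    ← integral_add (hx2.const_mul _) (hy2.const_mul _)]
  refine integral_mono_of_nonneg (.of_forall fun ω => by positivity)
    ((hx2.const_mul _).add (hy2.const_mul _)) (.of_forall fun ω => ?_)
  have hAx : ‖A (x ω)‖ ≤ ‖x ω‖ := (A.le_of_opNorm_le hA (x ω)).trans_eq (one_mul _)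
  calc ‖A (x ω) + y ω‖ ^ 2 ≤ (1 + ε) * ‖A (x ω)‖ ^ 2 + (1 + ε⁻¹) * ‖y ω‖ ^ 2 :=
        norm_add_sq_le_of_pos _ _ hε
    _ ≤ (1 + ε) * ‖x ω‖ ^ 2 + (1 + ε⁻¹) * ‖y ω‖ ^ 2 := by gcongr

section Bernoulli

variable {Ω E : Type*} [MeasurableSpace Ω] {μ : Measure Ω} {s : Ω → ℝ} {p : ℝ}
  [NormedAddCommGroup E] [NormedSpace ℝ E]

theorem integral_eq_of_eq_zero_or_eq_one (hs01 : ∀ ω, s ω = 0 ∨ s ω = 1) (hs : Measurable s)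
    (hsp : μ (s ⁻¹' {1}) = ENNReal.ofReal p) (hp : 0 ≤ p) : ∫ ω, s ω ∂μ = p := by
  have hs_ind : s = (s ⁻¹' {1}).indicator 1 := by
    funext ω
    rcases hs01 ω with h | h <;> simp [Set.indicator, h]
  rw [hs_ind, integral_indicator_one (hs (measurableSet_singleton 1)), measureReal_def, hsp,
    ENNReal.toReal_ofReal hp]

theorem MeasureTheory.MemLp.one_sub_smul_of_eq_zero_or_eq_one {v : Ω → E} {q : ENNReal} (hv : MemLp v q μ)
    (hs01 : ∀ ω, s ω = 0 ∨ s ω = 1) (hs : Measurable s) :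
    MemLp (fun ω => (1 - s ω) • v ω) q μ := by
  refine hv.of_le ((measurable_const.sub hs).aestronglyMeasurable.smul hv.1) ?_
  filter_upwards with ω
  rcases hs01 ω with h | h <;> simp [h]

variable [IsProbabilityMeasure μ] [MeasurableSpace E] [BorelSpace E]

theorem integral_norm_one_sub_smul_sq_of_indepFun {v : Ω → E}
    (hs01 : ∀ ω, s ω = 0 ∨ s ω = 1) (hs : Measurable s)
    (hsp : μ (s ⁻¹' {1}) = ENNReal.ofReal p) (hp : 0 ≤ p) (hv : AEStronglyMeasurable v μ)
    (hind : IndepFun s v μ) :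
    ∫ ω, ‖(1 - s ω) • v ω‖ ^ 2 ∂μ = (1 - p) * ∫ ω, ‖v ω‖ ^ 2 ∂μ := by
  have hind' : IndepFun (fun ω => 1 - s ω) (fun ω => ‖v ω‖ ^ 2) μ :=
    hind.comp (measurable_const.sub measurable_id) (measurable_norm.pow_const 2)
  have hs_int : Integrable s μ := by
    refine (integrable_const (1 : ℝ)).mono' hs.aestronglyMeasurable ?_
    filter_upwards with ω
    rcases hs01 ω with h | h <;> norm_num [h]
  rw [integral_congr_ae (.of_forall fun ω =>
      norm_one_sub_smul_sq_of_eq_zero_or_eq_one (hs01 ω) (v ω)),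
    hind'.integral_fun_mul_eq_mul_integral (measurable_const.sub hs).aestronglyMeasurable
      (hv.norm.pow 2), integral_sub (integrable_const 1) hs_int,
    integral_eq_of_eq_zero_or_eq_one hs01 hs hsp hp]
  simp

theorem integral_norm_one_sub_smul_map_add_sq_le [SecondCountableTopology E] {A : E →L[ℝ] E}
    (hA : ‖A‖ ≤ 1) {x y : Ω → E} (hx : MemLp x 2 μ) (hy : MemLp y 2 μ)
    (hs01 : ∀ ω, s ω = 0 ∨ s ω = 1) (hs : Measurable s)
    (hsp : μ (s ⁻¹' {1}) = ENNReal.ofReal p) (hp0 : 0 ≤ p) (hp1 : p ≤ 1)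
    (hind : IndepFun s (fun ω => (x ω, y ω)) μ) {ε : ℝ} (hε : 0 < ε) :
    ∫ ω, ‖(1 - s ω) • (A (x ω) + y ω)‖ ^ 2 ∂μ ≤
      (1 - p) * ((1 + ε) * ∫ ω, ‖x ω‖ ^ 2 ∂μ + (1 + ε⁻¹) * ∫ ω, ‖y ω‖ ^ 2 ∂μ) := by
  have hind' : IndepFun s (fun ω => A (x ω) + y ω) μ :=
    hind.comp (ψ := fun z : E × E => A z.1 + z.2) measurable_id (by fun_prop)
  rw [integral_norm_one_sub_smul_sq_of_indepFun (v := fun ω => A (x ω) + y ω) hs01 hs hsp hp0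
    ((hx.continuousLinearMap_comp A).add hy).1 hind']
  exact mul_le_mul_of_nonneg_left (integral_map_add_norm_sq_le hA hx hy hε) (by linarith)

end Bernoulli

theorem stmt2_general
    {Ω : Type*} [MeasurableSpace Ω] (μ : Measure Ω) [IsProbabilityMeasure μ]
    (d : ℕ)
    (A : EuclideanSpace ℝ (Fin d) →L[ℝ] EuclideanSpace ℝ (Fin d))
    (hA : ‖A‖ ≤ 1)
    (s : ℕ → Ω → ℝ) (p : ℝ) (hp0 : 0 < p) (hp1 : p ≤ 1)
    (hs01 : ∀ t ω, s t ω = 0 ∨ s t ω = 1)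
    (hsmeas : ∀ t, Measurable (s t))
    (hsBernoulli : ∀ t, μ (s t ⁻¹' {1}) = ENNReal.ofReal p)
    (w : ℕ → Ω → EuclideanSpace ℝ (Fin d)) (C₂ : ℝ)
    (hwmeas : ∀ t, AEStronglyMeasurable (w t) μ)
    (hwint : ∀ t, Integrable (fun ω => ‖w t ω‖ ^ 2) μ)
    (hwvar : ∀ t, ∫ ω, ‖w t ω‖ ^ 2 ∂μ ≤ C₂)
    (e : ℕ → Ω → EuclideanSpace ℝ (Fin d))
    (he0 : ∀ ω, e 0 ω = 0)
    (herec : ∀ t ω, e (t + 1) ω = (1 - s (t + 1) ω) • (A (e t ω) + w t ω))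
    (hindep : ∀ t, IndepFun (s (t + 1)) (fun ω => (e t ω, w t ω)) μ) :
    ∃ γD : ℝ, ∀ t, ∫ ω, ‖e t ω‖ ^ 2 ∂μ ≤ γD := by
  have hw t : MemLp (w t) 2 μ := (memLp_two_iff_integrable_sq_norm (hwmeas t)).2 (hwint t)
  have hC₂ : 0 ≤ C₂ := (integral_nonneg fun ω => by positivity).trans (hwvar 0)
  have hp2 : 0 ≤ 1 - p ^ 2 := by nlinarith
  have he t : MemLp (e t) 2 μ := by
    induction t with
    | zero => rw [funext he0]; exact memLp_const 0
    | succ t ih =>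
      rw [funext (herec t)]
      exact ((ih.continuousLinearMap_comp A).add (hw t)).one_sub_smul_of_eq_zero_or_eq_one
        (hs01 _) (hsmeas _)
  have hstep t : ∫ ω, ‖e (t + 1) ω‖ ^ 2 ∂μ ≤
      (1 - p ^ 2) * ∫ ω, ‖e t ω‖ ^ 2 ∂μ + (1 - p ^ 2) / p * C₂ := calc
    _ ≤ (1 - p) * ((1 + p) * ∫ ω, ‖e t ω‖ ^ 2 ∂μ + (1 + p⁻¹) * ∫ ω, ‖w t ω‖ ^ 2 ∂μ) := by
      simp_rw [herec t]
      exact integral_norm_one_sub_smul_map_add_sq_le hA (he t) (hw t) (hs01 _) (hsmeas _)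
        (hsBernoulli _) hp0.le hp1 (hindep t) hp0
    _ ≤ (1 - p) * ((1 + p) * ∫ ω, ‖e t ω‖ ^ 2 ∂μ + (1 + p⁻¹) * C₂) := by
      gcongr
      exact hwvar t
    _ = _ := by field_simp; ring
  refine ⟨(1 - p ^ 2) * C₂ / p ^ 3, le_of_le_mul_add_of_mul_add_le hp2 hstep ?_ ?_⟩
  · exact le_of_eq (by field_simp; ring)
  · simp only [he0, norm_zero, zero_pow two_ne_zero, integral_zero]
    positivity

/-- Mean-square boundedness of the dropout-compensator error: for the recursion
`e (t+1) = (1 - s (t+1)) • (A (e t) + w t)` with `e 0 = 0`, where the `s t` are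
Bernoulli(p) with `p ∈ (0,1]`, each `s (t+1)` independent of `(e t, w t)`, the noise
is zero mean with `E[‖w t‖²] ≤ C₂`, and `‖A‖ ≤ 1`, there exists `γD < ∞` with
`E[‖e t‖²] ≤ γD` for all `t`. -/
theorem stmt2
    {Ω : Type*} [MeasurableSpace Ω] (μ : Measure Ω) [IsProbabilityMeasure μ]
    (d : ℕ)
    (A : EuclideanSpace ℝ (Fin d) →L[ℝ] EuclideanSpace ℝ (Fin d))
    (hA : ‖A‖ ≤ 1)
    (s : ℕ → Ω → ℝ) (p : ℝ) (hp0 : 0 < p) (hp1 : p ≤ 1)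
    (hs01 : ∀ t ω, s t ω = 0 ∨ s t ω = 1)
    (hsmeas : ∀ t, Measurable (s t))
    (hsBernoulli : ∀ t, μ (s t ⁻¹' {1}) = ENNReal.ofReal p)
    (w : ℕ → Ω → EuclideanSpace ℝ (Fin d)) (C₂ : ℝ)
    (hwmeas : ∀ t, AEStronglyMeasurable (w t) μ)
    (hwint : ∀ t, Integrable (fun ω => ‖w t ω‖ ^ 2) μ)
    (hwmean : ∀ t, ∫ ω, w t ω ∂μ = 0)
    (hwvar : ∀ t, ∫ ω, ‖w t ω‖ ^ 2 ∂μ ≤ C₂)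
    (e : ℕ → Ω → EuclideanSpace ℝ (Fin d))
    (he0 : ∀ ω, e 0 ω = 0)
    (herec : ∀ t ω, e (t + 1) ω = (1 - s (t + 1) ω) • (A (e t ω) + w t ω))
    (hindep : ∀ t, IndepFun (s (t + 1)) (fun ω => (e t ω, w t ω)) μ) :
    ∃ γD : ℝ, ∀ t, ∫ ω, ‖e t ω‖ ^ 2 ∂μ ≤ γD :=
  stmt2_general μ d A hA s p hp0 hp1 hs01 hsmeas hsBernoulli w C₂ hwmeas hwint hwvar e he0 herec
    hindep
end

section
/- One-step drift implies geometric decay of expected excursions in a scalar surrogate: let (X_t) be a real-valued adapted process with |X_{t+1} - X_t| ≤ b a.s. for some b > 0, and suppose E[X_{t+1} - X_t | F_t] ≤ -ζ whenever X_t > c, for constants ζ > 0, c ≥ 0. Then sup_t E[max(X_t, 0)²] < ∞ provided E[max(X_0,0)²] < ∞. -/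
/-!
Use the exponential Lyapunov function `V t = exp (λ (X t - R))` with `λ = ζ / (2 b²)` and the
`ℱ 0`-measurable level `R = max (max (X 0) 0) c`; since `R ≥ X 0`, `V 0 ≤ 1` whatever the
moments of `X 0`. On `{X t > c}`, `exp u ≤ 1 + u + u²` for `|u| ≤ 1` gives
`V (t+1) ≤ V t (1 + λ (X (t+1) - X t) + λ²b²)`, and conditioning on `ℱ t` turns the linear term
into at most `-λζ`; on `{X t ≤ c} ⊆ {X t ≤ R}` the bounded increment gives `V (t+1) ≤ exp (λ b)`.
Hence `E V (t+1) ≤ (1 - λζ + λ²b²) E V t + exp (λ b)`, a contracting recursion because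
`λ b² < ζ`, and `max (X t) 0 ^ 2 ≤ 2 R² + (4 / λ²) V t` transfers the bound to the second moment.
-/

open MeasureTheory Real

lemma sq_max_zero_le_sq_add_exp {lam : ℝ} (hlam : 0 < lam) (x : ℝ) {r : ℝ} (hr : 0 ≤ r) :
    max x 0 ^ 2 ≤ 2 * r ^ 2 + 4 / lam ^ 2 * exp (lam * (x - r)) := by
  have hexp : 0 ≤ 4 / lam ^ 2 * exp (lam * (x - r)) := by positivity
  rcases le_or_gt x r with hxr | hrx
  · have : max x 0 ^ 2 ≤ r ^ 2 := pow_le_pow_left₀ (le_max_right _ _) (max_le hxr hr) 2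
    nlinarith
  · have hy : 0 ≤ lam * (x - r) := mul_nonneg hlam.le (by linarith)
    have hquad : (lam * (x - r)) ^ 2 / 2 ≤ exp (lam * (x - r)) := by
      linarith [quadratic_le_exp_of_nonneg hy]
    have hsq : 2 * (x - r) ^ 2 ≤ 4 / lam ^ 2 * exp (lam * (x - r)) := by
      rw [div_mul_eq_mul_div, le_div_iff₀ (by positivity)]
      nlinarith
    rw [max_eq_left (by linarith)]
    nlinarith [sq_nonneg (x - 2 * r)]

lemma max_sq_le_sq_add_sq (a c : ℝ) : max a c ^ 2 ≤ a ^ 2 + c ^ 2 := by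
  rcases le_total a c with h | h
  · rw [max_eq_right h]; nlinarith
  · rw [max_eq_left h]; nlinarith

lemma exp_mul_le_of_abs_le {lam b u : ℝ} (hlam : 0 ≤ lam) (hlamb : lam * b ≤ 1) (hu : |u| ≤ b) :
    exp (lam * u) ≤ 1 + lam * u + (lam * b) ^ 2 := by
  have hlu : |lam * u| ≤ lam * b := by
    rw [abs_mul, abs_of_nonneg hlam]; exact mul_le_mul_of_nonneg_left hu hlam
  have hsq : (lam * u) ^ 2 ≤ (lam * b) ^ 2 := sq_le_sq' (abs_le.mp hlu).1 (abs_le.mp hlu).2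
  linarith [le_abs_self (exp (lam * u) - 1 - lam * u),
    abs_exp_sub_one_sub_id_le (hlu.trans hlamb)]

lemma le_max_div_of_le_mul_add {a : ℕ → ℝ} {ρ K : ℝ} (hρ0 : 0 ≤ ρ) (hρ1 : ρ < 1)
    (h : ∀ t, a (t + 1) ≤ ρ * a t + K) (t : ℕ) : a t ≤ max (a 0) (K / (1 - ρ)) := by
  induction t with
  | zero => exact le_max_left _ _
  | succ t ih =>
    have hK : K ≤ (1 - ρ) * max (a 0) (K / (1 - ρ)) := by
      rw [← div_le_iff₀' (by linarith)]; exact le_max_right _ _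
    nlinarith [h t, mul_le_mul_of_nonneg_left ih hρ0]

lemma ae_sub_le_mul_of_abs_sub_le {Ω : Type*} {mΩ : MeasurableSpace Ω} {μ : Measure Ω}
    {X : ℕ → Ω → ℝ} {b : ℝ} (hincr : ∀ t, ∀ᵐ ω ∂μ, |X (t + 1) ω - X t ω| ≤ b) (t : ℕ) :
    ∀ᵐ ω ∂μ, X t ω - X 0 ω ≤ t * b := by
  induction t with
  | zero => simp
  | succ t ih =>
    filter_upwards [ih, hincr t] with ω hω hω'
    push_cast
    linarith [(abs_le.mp hω').2]

lemma integral_mul_le_of_condExp_le {Ω : Type*} {m mΩ : MeasurableSpace Ω} {μ : Measure Ω}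
    [IsFiniteMeasure μ] (hm : m ≤ mΩ) {h Δ : Ω → ℝ} {C ζ : ℝ} (hh : StronglyMeasurable[m] h)
    (hh0 : 0 ≤ᵐ[μ] h) (hhC : ∀ᵐ ω ∂μ, h ω ≤ C) (hΔ : Integrable Δ μ)
    (hdrift : ∀ᵐ ω ∂μ, h ω ≠ 0 → μ[Δ|m] ω ≤ -ζ) :
    ∫ ω, h ω * Δ ω ∂μ ≤ -ζ * ∫ ω, h ω ∂μ := by
  have hbdd : ∀ᵐ ω ∂μ, ‖h ω‖ ≤ C := by
    filter_upwards [hh0, hhC] with ω h0 hC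
    rwa [Real.norm_of_nonneg h0]
  have hh' : AEStronglyMeasurable h μ := (hh.mono hm).aestronglyMeasurable
  have hint : Integrable h μ := (integrable_const C).mono' hh' hbdd
  calc ∫ ω, h ω * Δ ω ∂μ = ∫ ω, (μ[h * Δ|m]) ω ∂μ := (integral_condExp hm).symm
    _ = ∫ ω, h ω * (μ[Δ|m]) ω ∂μ :=
      integral_congr_ae (condExp_mul_of_stronglyMeasurable_left hh (hΔ.bdd_mul hh' hbdd) hΔ)
    _ ≤ ∫ ω, -ζ * h ω ∂μ := by
      refine integral_mono_ae (integrable_condExp.bdd_mul hh' hbdd) (hint.const_mul _) ?_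
      filter_upwards [hh0, hdrift] with ω h0 hω
      rcases (h0 : 0 ≤ h ω).eq_or_lt with h0 | h0
      · simp [← h0]
      · have := mul_le_mul_of_nonneg_left (hω h0.ne') h0.le
        linarith
    _ = -ζ * ∫ ω, h ω ∂μ := integral_const_mul _ _

lemma integral_le_mul_integral_add_of_condExp_le {Ω : Type*} {m mΩ : MeasurableSpace Ω}
    {μ : Measure Ω} [IsProbabilityMeasure μ] (hm : m ≤ mΩ) {S : Set Ω} {g g' Δ : Ω → ℝ}
    {C ζ lam κ K : ℝ} (hS : MeasurableSet[m] S) (hg : StronglyMeasurable[m] g)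
    (hg0 : ∀ ω, 0 ≤ g ω) (hgC : ∀ᵐ ω ∂μ, g ω ≤ C) (hΔ : Integrable Δ μ)
    (hdrift : ∀ᵐ ω ∂μ, ω ∈ S → μ[Δ|m] ω ≤ -ζ) (hlam : 0 ≤ lam) (hρ : 0 ≤ 1 - lam * ζ + κ)
    (hg'0 : 0 ≤ᵐ[μ] g') (hpointwise : ∀ᵐ ω ∂μ, g' ω ≤ S.indicator g ω * (1 + lam * Δ ω + κ) + K) :
    ∫ ω, g' ω ∂μ ≤ (1 - lam * ζ + κ) * ∫ ω, g ω ∂μ + K := by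
  set h := S.indicator g
  have hh0 : ∀ ω, 0 ≤ h ω := Set.indicator_nonneg fun ω _ => hg0 ω
  have hhg : ∀ ω, h ω ≤ g ω := Set.indicator_le_self' fun ω _ => hg0 ω
  have hhC : ∀ᵐ ω ∂μ, ‖h ω‖ ≤ C := by
    filter_upwards [hgC] with ω hω
    rw [Real.norm_of_nonneg (hh0 ω)]
    exact (hhg ω).trans hω
  have hg_int : Integrable g μ := (integrable_const C).mono' (hg.mono hm).aestronglyMeasurable
    (by filter_upwards [hgC] with ω hω; rwa [Real.norm_of_nonneg (hg0 ω)])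
  have hh_int : Integrable h μ := hg_int.indicator (hm S hS)
  have hhΔ_int : Integrable (fun ω => h ω * Δ ω) μ :=
    hΔ.bdd_mul ((hg.indicator hS).mono hm).aestronglyMeasurable hhC
  have hdrift_int : ∫ ω, h ω * Δ ω ∂μ ≤ -ζ * ∫ ω, h ω ∂μ := by
    refine integral_mul_le_of_condExp_le hm (hg.indicator hS) (ae_of_all _ hh0)
      (by filter_upwards [hgC] with ω hω; exact (hhg ω).trans hω) hΔ ?_
    filter_upwards [hdrift] with ω hω hne
    exact hω (by_contra fun hωS => hne (Set.indicator_of_notMem hωS g))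
  calc ∫ ω, g' ω ∂μ
      ≤ ∫ ω, ((1 + κ) * h ω + lam * (h ω * Δ ω) + K) ∂μ := by
        refine integral_mono_of_nonneg hg'0
          (((hh_int.const_mul _).add (hhΔ_int.const_mul _)).add (integrable_const _)) ?_
        filter_upwards [hpointwise] with ω hω
        exact hω.trans_eq (by ring)
    _ = (1 + κ) * ∫ ω, h ω ∂μ + lam * ∫ ω, h ω * Δ ω ∂μ + K := by
        rw [integral_add ?_ (integrable_const _), integral_add ?_ ?_, integral_const_mul,
          integral_const_mul, integral_const, probReal_univ, one_smul]
        exacts [hh_int.const_mul _, hhΔ_int.const_mul _,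
          (hh_int.const_mul _).add (hhΔ_int.const_mul _)]
    _ ≤ (1 - lam * ζ + κ) * ∫ ω, h ω ∂μ + K := by
        nlinarith [mul_le_mul_of_nonneg_left hdrift_int hlam]
    _ ≤ (1 - lam * ζ + κ) * ∫ ω, g ω ∂μ + K := by
        have := mul_le_mul_of_nonneg_left (integral_mono hh_int hg_int hhg) hρ
        linarith

section ExponentialLyapunov

variable {Ω : Type*} {mΩ : MeasurableSpace Ω} {μ : Measure Ω} {ℱ : Filtration ℕ mΩ}
  {X : ℕ → Ω → ℝ} {R : Ω → ℝ} {b ζ c lam : ℝ}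

lemma stronglyMeasurable_exp_mul_sub (hadapted : Adapted ℱ X) (hR : Measurable[ℱ 0] R)
    (t : ℕ) : StronglyMeasurable[ℱ t] (fun ω => exp (lam * (X t ω - R ω))) :=
  (continuous_exp.measurable.comp
    (((hadapted t).sub (hR.mono (ℱ.mono (Nat.zero_le t)) le_rfl)).const_mul lam)).stronglyMeasurable

lemma ae_exp_mul_sub_le (hXR : ∀ ω, X 0 ω ≤ R ω) (hlam : 0 ≤ lam)
    (hincr : ∀ t, ∀ᵐ ω ∂μ, |X (t + 1) ω - X t ω| ≤ b) (t : ℕ) :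
    ∀ᵐ ω ∂μ, exp (lam * (X t ω - R ω)) ≤ exp (lam * (t * b)) := by
  filter_upwards [ae_sub_le_mul_of_abs_sub_le hincr t] with ω hω
  gcongr
  linarith [hXR ω]

lemma integrable_exp_mul_sub [IsFiniteMeasure μ] (hadapted : Adapted ℱ X)
    (hR : Measurable[ℱ 0] R) (hXR : ∀ ω, X 0 ω ≤ R ω) (hlam : 0 ≤ lam)
    (hincr : ∀ t, ∀ᵐ ω ∂μ, |X (t + 1) ω - X t ω| ≤ b) (t : ℕ) :
    Integrable (fun ω => exp (lam * (X t ω - R ω))) μ := by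
  refine (integrable_const (exp (lam * (t * b)))).mono'
    ((stronglyMeasurable_exp_mul_sub hadapted hR t).mono (ℱ.le t)).aestronglyMeasurable ?_
  filter_upwards [ae_exp_mul_sub_le hXR hlam hincr t] with ω hω
  rwa [Real.norm_of_nonneg (exp_pos _).le]

lemma one_sub_mul_add_sq_nonneg (hlam : 0 ≤ lam) (hζb : ζ ≤ b) :
    0 ≤ 1 - lam * ζ + (lam * b) ^ 2 := by
  nlinarith [mul_le_mul_of_nonneg_left hζb hlam, sq_nonneg (lam * b - 1)]

variable [IsProbabilityMeasure μ]

lemma integral_exp_mul_sub_succ_le (hadapted : Adapted ℱ X) (hXint : ∀ t, Integrable (X t) μ)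
    (hR : Measurable[ℱ 0] R) (hRc : ∀ ω, c ≤ R ω) (hXR : ∀ ω, X 0 ω ≤ R ω)
    (hlam : 0 ≤ lam) (hlamb : lam * b ≤ 1) (hζb : ζ ≤ b)
    (hincr : ∀ t, ∀ᵐ ω ∂μ, |X (t + 1) ω - X t ω| ≤ b)
    (hdrift : ∀ t, ∀ᵐ ω ∂μ,
      c < X t ω → (μ[fun ω' => X (t + 1) ω' - X t ω'|ℱ t]) ω ≤ -ζ) (t : ℕ) :
    ∫ ω, exp (lam * (X (t + 1) ω - R ω)) ∂μ ≤
      (1 - lam * ζ + (lam * b) ^ 2) * ∫ ω, exp (lam * (X t ω - R ω)) ∂μ + exp (lam * b) := by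
  set S : Set Ω := {ω | c < X t ω}
  refine integral_le_mul_integral_add_of_condExp_le (ℱ.le t)
    (measurableSet_lt measurable_const (hadapted t)) (stronglyMeasurable_exp_mul_sub hadapted hR t)
    (fun ω => (exp_pos _).le) (ae_exp_mul_sub_le hXR hlam hincr t)
    ((hXint (t + 1)).sub (hXint t)) (hdrift t) hlam (one_sub_mul_add_sq_nonneg hlam hζb)
    (ae_of_all _ fun ω => (exp_pos _).le) ?_
  filter_upwards [hincr t] with ω hω
  by_cases hωS : ω ∈ S
  · rw [Set.indicator_of_mem hωS, Pi.sub_apply]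
    calc exp (lam * (X (t + 1) ω - R ω))
        = exp (lam * (X t ω - R ω)) * exp (lam * (X (t + 1) ω - X t ω)) := by
          rw [← exp_add]; ring_nf
      _ ≤ exp (lam * (X t ω - R ω)) * (1 + lam * (X (t + 1) ω - X t ω) + (lam * b) ^ 2) :=
          mul_le_mul_of_nonneg_left (exp_mul_le_of_abs_le hlam hlamb hω) (exp_pos _).le
      _ ≤ _ := le_add_of_nonneg_right (exp_pos _).le
  · have hX : X t ω ≤ c := not_lt.mp hωS
    rw [Set.indicator_of_notMem hωS, zero_mul, zero_add]
    gcongr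
    linarith [(abs_le.mp hω).2, hRc ω]

lemma exists_integral_exp_mul_sub_le (hadapted : Adapted ℱ X) (hXint : ∀ t, Integrable (X t) μ)
    (hR : Measurable[ℱ 0] R) (hRc : ∀ ω, c ≤ R ω) (hXR : ∀ ω, X 0 ω ≤ R ω)
    (hlam : 0 < lam) (hlamb : lam * b ≤ 1) (hlamb2 : lam * b ^ 2 < ζ) (hζb : ζ ≤ b)
    (hincr : ∀ t, ∀ᵐ ω ∂μ, |X (t + 1) ω - X t ω| ≤ b)
    (hdrift : ∀ t, ∀ᵐ ω ∂μ,
      c < X t ω → (μ[fun ω' => X (t + 1) ω' - X t ω'|ℱ t]) ω ≤ -ζ) :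
    ∃ B, ∀ t, ∫ ω, exp (lam * (X t ω - R ω)) ∂μ ≤ B := by
  have hρ1 : 1 - lam * ζ + (lam * b) ^ 2 < 1 := by nlinarith [mul_lt_mul_of_pos_left hlamb2 hlam]
  have hstart : ∫ ω, exp (lam * (X 0 ω - R ω)) ∂μ ≤ 1 := by
    calc ∫ ω, exp (lam * (X 0 ω - R ω)) ∂μ ≤ ∫ _, (1 : ℝ) ∂μ :=
          integral_mono (integrable_exp_mul_sub hadapted hR hXR hlam.le hincr 0)
            (integrable_const 1) fun ω => exp_le_one_iff.mpr
              (mul_nonpos_of_nonneg_of_nonpos hlam.le (by linarith [hXR ω]))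
      _ = 1 := by simp
  refine ⟨max 1 (exp (lam * b) / (1 - (1 - lam * ζ + (lam * b) ^ 2))), fun t => ?_⟩
  refine (le_max_div_of_le_mul_add (a := fun t => ∫ ω, exp (lam * (X t ω - R ω)) ∂μ)
    (one_sub_mul_add_sq_nonneg hlam.le hζb) hρ1 (integral_exp_mul_sub_succ_le hadapted hXint hR
      hRc hXR hlam.le hlamb hζb hincr hdrift) t).trans ?_
  gcongr

end ExponentialLyapunov

theorem stmt17_general
    {Ω : Type*} {mΩ : MeasurableSpace Ω} (μ : Measure Ω) [IsProbabilityMeasure μ]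
    (ℱ : Filtration ℕ mΩ) (X : ℕ → Ω → ℝ)
    (b ζ c : ℝ) (hb : 0 < b) (hζ : 0 < ζ) (hζb : ζ ≤ b)
    (hadapted : Adapted ℱ X)
    (hXint : ∀ t, Integrable (X t) μ)
    (hincr : ∀ t, ∀ᵐ ω ∂μ, |X (t + 1) ω - X t ω| ≤ b)
    (hdrift : ∀ t, ∀ᵐ ω ∂μ,
      c < X t ω → (μ[fun ω' => X (t + 1) ω' - X t ω'|ℱ t]) ω ≤ -ζ)
    (h0 : Integrable (fun ω => max (X 0 ω) 0 ^ 2) μ) :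
    ∃ γ : ℝ, ∀ t, ∫ ω, max (X t ω) 0 ^ 2 ∂μ ≤ γ := by
  set lam := ζ / (2 * b ^ 2)
  have hlam : 0 < lam := by positivity
  have hlamb : lam * b ≤ 1 := by
    rw [div_mul_eq_mul_div, div_le_one (by positivity)]; nlinarith
  have hlamb2 : lam * b ^ 2 < ζ := by
    rw [div_mul_eq_mul_div, div_lt_iff₀ (by positivity)]; nlinarith [mul_pos hζ (pow_pos hb 2)]
  set R : Ω → ℝ := fun ω => max (max (X 0 ω) 0) c
  have hR : Measurable[ℱ 0] R := ((hadapted 0).max measurable_const).max measurable_const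
  have hXR : ∀ ω, X 0 ω ≤ R ω := fun ω => (le_max_left _ _).trans (le_max_left _ _)
  have hR0 : ∀ ω, 0 ≤ R ω := fun ω => (le_max_right _ _).trans (le_max_left _ _)
  obtain ⟨B, hB⟩ := exists_integral_exp_mul_sub_le hadapted hXint hR (fun ω => le_max_right _ _)
    hXR hlam hlamb hlamb2 hζb hincr hdrift
  have hR2 : Integrable (fun ω => R ω ^ 2) μ := by
    refine (h0.add (integrable_const (c ^ 2))).mono'
      ((hR.mono (ℱ.le 0) le_rfl).pow_const 2).aestronglyMeasurable (ae_of_all _ fun ω => ?_)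
    rw [Real.norm_of_nonneg (sq_nonneg _)]
    exact max_sq_le_sq_add_sq _ c
  have hg := integrable_exp_mul_sub hadapted hR hXR hlam.le hincr
  refine ⟨2 * ∫ ω, R ω ^ 2 ∂μ + 4 / lam ^ 2 * B, fun t => ?_⟩
  calc ∫ ω, max (X t ω) 0 ^ 2 ∂μ
      ≤ ∫ ω, (2 * R ω ^ 2 + 4 / lam ^ 2 * exp (lam * (X t ω - R ω))) ∂μ :=
        integral_mono_of_nonneg (ae_of_all _ fun ω => sq_nonneg _)
          ((hR2.const_mul 2).add ((hg t).const_mul _))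
          (ae_of_all _ fun ω => sq_max_zero_le_sq_add_exp hlam _ (hR0 ω))
    _ = 2 * ∫ ω, R ω ^ 2 ∂μ + 4 / lam ^ 2 * ∫ ω, exp (lam * (X t ω - R ω)) ∂μ := by
        rw [integral_add (hR2.const_mul 2) ((hg t).const_mul _), integral_const_mul,
          integral_const_mul]
    _ ≤ 2 * ∫ ω, R ω ^ 2 ∂μ + 4 / lam ^ 2 * B := by gcongr; exact hB t

/-- Scalar geometric drift: if `(X t)` is adapted, has a.s. bounded increments
`|X (t+1) - X t| ≤ b`, and satisfies the conditional drift
`E[X (t+1) - X t | ℱ t] ≤ -ζ` on the event `{X t > c}`, with `0 < ζ ≤ b`, `c ≥ 0`,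
and `E[max(X 0, 0)²] < ∞`, then `sup_t E[max(X t, 0)²] < ∞`. -/
theorem stmt17
    {Ω : Type*} {mΩ : MeasurableSpace Ω} (μ : Measure Ω) [IsProbabilityMeasure μ]
    (ℱ : Filtration ℕ mΩ) (X : ℕ → Ω → ℝ)
    (b ζ c : ℝ) (hb : 0 < b) (hζ : 0 < ζ) (hζb : ζ ≤ b) (hc : 0 ≤ c)
    (hadapted : Adapted ℱ X)
    (hXint : ∀ t, Integrable (X t) μ)
    (hincr : ∀ t, ∀ᵐ ω ∂μ, |X (t + 1) ω - X t ω| ≤ b)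
    (hdrift : ∀ t, ∀ᵐ ω ∂μ,
      c < X t ω → (μ[fun ω' => X (t + 1) ω' - X t ω'|ℱ t]) ω ≤ -ζ)
    (h0 : Integrable (fun ω => max (X 0 ω) 0 ^ 2) μ) :
    ∃ γ : ℝ, ∀ t, ∫ ω, max (X t ω) 0 ^ 2 ∂μ ≤ γ :=
  stmt17_general μ ℱ X b ζ c hb hζ hζb hadapted hXint hincr hdrift h0
end
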